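/- arXiv:1111.0498 — 8 statements merged into one kernel-verified Lean document; each statement's English description precedes it below -/
import Mathlib

section
/- Let K be a field of characteristic different from 2 and let σ ∈ K[z] be a polynomial. The ring K[z][τ]/(τ² − σ), i.e. AdjoinRoot (X² − C σ) over the polynomial ring K[z], is reduced if and only if σ ≠ 0. -/
open Polynomial

theorem AdjoinRoot.isReduced_iff_isRadical {R : Type*} [CommRing R] (f : R[X]) :
    IsReduced (AdjoinRoot f) ↔ IsRadical f := by
  rw [isRadical_iff_span_singleton, Ideal.isRadical_iff_quotient_reduced]
  rfl

theorem AdjoinRoot.isReduced_iff_squarefree {R : Type*} [CommRing R] [IsDomain R]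
    [DecompositionMonoid R[X]] {f : R[X]} (hf : f ≠ 0) :
    IsReduced (AdjoinRoot f) ↔ Squarefree f := by
  rw [isReduced_iff_isRadical, isRadical_iff_squarefree_or_zero, or_iff_left hf]

/-- A square factor `p ^ 2` of `X ^ 2 - C a` forces `p` to divide the derivative `2 X`, hence
to be a unit or an associate of `X`. -/
theorem Polynomial.squarefree_X_sq_sub_C_iff {R : Type*} [CommRing R] [IsDomain R]
    (h2 : IsUnit (2 : R)) {a : R} : Squarefree (X ^ 2 - C a) ↔ a ≠ 0 := by
  constructor
  · rintro hsq rfl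
    exact not_isUnit_X (hsq X ⟨1, by simp [sq]⟩)
  · intro ha p hp
    have hp_dvd_X : p ∣ X := by
      have hpd : p ^ (2 - 1) ∣ derivative (X ^ 2 - C a) :=
        pow_sub_one_dvd_derivative_of_pow_dvd (by rwa [sq])
      rwa [pow_one, derivative_sub, derivative_sq, derivative_X, derivative_C, sub_zero, mul_one,
        (h2.map C).dvd_mul_left] at hpd
    refine (irreducible_X.dvd_iff.mp hp_dvd_X).resolve_right fun hXp ↦ ha ?_
    have hX : X ∣ X ^ 2 - C a := hXp.dvd.trans ((dvd_mul_right p p).trans hp)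
    simpa using X_dvd_iff.mp hX

/-- Lemma 4.2(1), affine-chart form: for a field `K` of characteristic `≠ 2` and a polynomial
`σ ∈ K[z]`, the ring `K[z][τ]/(τ² - σ)` is reduced iff `σ ≠ 0`. -/
theorem adjoinRoot_polynomial_isReduced_iff_ne_zero {K : Type*} [Field K] (h2 : (2 : K) ≠ 0)
    (σ : Polynomial K) :
    IsReduced (AdjoinRoot (X ^ 2 - C σ)) ↔ σ ≠ 0 := by
  rw [AdjoinRoot.isReduced_iff_squarefree (monic_X_pow_sub_C σ two_ne_zero).ne_zero,
    squarefree_X_sq_sub_C_iff]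
  exact map_ofNat (C : K →+* K[X]) 2 ▸ (isUnit_iff_ne_zero.mpr h2).map C
end

section
/- Let K be a field of characteristic different from 2 and let σ ∈ K[z] be a polynomial. The ring K[z][τ]/(τ² − σ), i.e. AdjoinRoot (X² − C σ) over the polynomial ring K[z], viewed as a K-algebra, is smooth over K if and only if σ is a separable polynomial. -/
open Polynomial

/-!
Write `f = τ² - σ(z)` in `P = K[z][τ]`. Since `P` is smooth over `K`, the quotient `A = P/(f)` is
formally smooth iff the projection `P/(f²) → A` has a `K`-algebra section. A section is given by
lifts `z + f d`, `τ + f e` satisfying the equation modulo `f²`; by first-order Taylor expansion this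
means `f ∣ 1 + 2τe - σ'(z) d`, i.e. the Jacobian ideal `(f, 2τ, σ'(z))` is the unit ideal. Setting
`τ = 0` turns this into `(σ, σ') = 1`; conversely a Bézout relation `aσ + bσ' = 1` gives the lifts
`d = b`, `e = -aτ/2`. Finite presentation is automatic.
-/

namespace Polynomial

variable {K : Type*} [CommRing K]

theorem aeval_C_X (σ : K[X]) : aeval (C X : K[X][X]) σ = C σ := by
  simpa using aeval_algHom_apply (CAlgHom : K[X] →ₐ[K] K[X][X]) X σ

theorem X_sq_sub_C_sq_dvd_iff (σ : K[X]) (d e : K[X][X]) :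
    (X ^ 2 - C σ) ^ 2 ∣ (X + (X ^ 2 - C σ) * e) ^ 2 - aeval (C X + (X ^ 2 - C σ) * d) σ ↔
      X ^ 2 - C σ ∣ 1 + 2 * X * e - C (derivative σ) * d := by
  set f : K[X][X] := X ^ 2 - C σ with hf
  obtain ⟨c, hc⟩ := exists_mul_sq_add_linear_part_eq_eval_add
    (σ.map (algebraMap K K[X][X])) (C X) (f * d)
  simp only [eval_map_algebraMap, derivative_map, aeval_C_X] at hc
  have htaylor : (X + f * e) ^ 2 - aeval (C X + f * d) σ =
      f * (1 + 2 * X * e - C (derivative σ) * d) + f ^ 2 * (e ^ 2 - c * d ^ 2) := by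
    rw [← hc]; linear_combination hf
  rw [htaylor, dvd_add_left (dvd_mul_right _ _), sq,
    (monic_X_pow_sub_C σ two_ne_zero).isRegular.left.dvd_cancel_left]

theorem exists_X_sq_sub_C_dvd_iff_isCoprime (h2 : IsUnit (2 : K)) (σ ρ : K[X]) :
    (∃ d e : K[X][X], X ^ 2 - C σ ∣ 1 + 2 * X * e - C ρ * d) ↔ IsCoprime σ ρ := by
  constructor
  · rintro ⟨d, e, k, hk⟩
    have h0 := congrArg (eval 0) hk
    simp only [eval_add, eval_sub, eval_mul, eval_pow, eval_X, eval_C, eval_one, eval_ofNat] at h0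
    exact ⟨-eval 0 k, eval 0 d, by linear_combination -h0⟩
  · rintro ⟨a, b, hab⟩
    obtain ⟨h, hh⟩ := h2.exists_left_inv
    have hh' : C (C h) * 2 = (1 : K[X][X]) := by
      simpa only [map_mul, map_ofNat, map_one] using congrArg (fun x ↦ C (C x)) hh
    have hab' : C a * C σ + C b * C ρ = (1 : K[X][X]) := by
      simpa only [map_add, map_mul, map_one] using congrArg C hab
    exact ⟨C b, -C (C h) * C a * X, -C a, by linear_combination (-C a * X ^ 2) * hh' - hab'⟩

end Polynomial

namespace AdjoinRoot

variable {R : Type*} [CommRing R]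

theorem ker_mk (f : R[X]) : RingHom.ker (mk f) = Ideal.span {f} :=
  Ideal.ext fun _ ↦ RingHom.mem_ker.trans (mk_eq_zero.trans Ideal.mem_span_singleton.symm)

theorem quotient_ker_sq_mk_eq_zero_iff (f p : R[X]) :
    Ideal.Quotient.mk (RingHom.ker (mk f) ^ 2) p = 0 ↔ f ^ 2 ∣ p := by
  rw [Ideal.Quotient.eq_zero_iff_mem, ker_mk, Ideal.span_singleton_pow,
    Ideal.mem_span_singleton]

variable {K : Type*} [CommRing K] {σ : K[X]}

theorem root_sq : root (X ^ 2 - C σ) ^ 2 = aeval (of (X ^ 2 - C σ) X) σ := by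
  rw [← mk_X, ← map_pow, mk_eq_mk.2 (dvd_refl _), mk_C, ← algebraMap_eq, aeval_algebraMap_apply,
    aeval_X_left_apply]

theorem apply_root_sq {B : Type*} [CommRing B] [Algebra K B]
    (φ : AdjoinRoot (X ^ 2 - C σ) →ₐ[K] B) : φ (root _) ^ 2 = aeval (φ (of _ X)) σ := by
  rw [← map_pow, root_sq]
  exact (aeval_algHom_apply φ _ σ).symm

theorem formallySmooth_iff_exists_dvd (σ : K[X]) :
    Algebra.FormallySmooth K (AdjoinRoot (X ^ 2 - C σ)) ↔
      ∃ d e : K[X][X], X ^ 2 - C σ ∣ 1 + 2 * X * e - C (derivative σ) * d := by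
  have : Algebra.FormallySmooth K K[X][X] := .comp K K[X] K[X][X]
  let π := (mkₐ (X ^ 2 - C σ)).restrictScalars K
  let mkQ := Ideal.Quotient.mkₐ K (RingHom.ker π.toRingHom ^ 2)
  have hπ (p : K[X][X]) : π.kerSquareLift (mkQ p) = mk _ p := rfl
  have hlift (d e : K[X][X]) :
      mkQ (X + (X ^ 2 - C σ) * e) ^ 2 = aeval (mkQ (C X + (X ^ 2 - C σ) * d)) σ ↔
        X ^ 2 - C σ ∣ 1 + 2 * X * e - C (derivative σ) * d := by
    rw [aeval_algHom_apply, ← map_pow, ← sub_eq_zero, ← map_sub]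
    exact (quotient_ker_sq_mk_eq_zero_iff _ _).trans (X_sq_sub_C_sq_dvd_iff σ d e)
  rw [Algebra.FormallySmooth.iff_split_surjection π mk_surjective]
  constructor
  · rintro ⟨g, hg⟩
    have hg' (a) : π.kerSquareLift (g a) = a := congr($hg a)
    obtain ⟨p, hp⟩ := Ideal.Quotient.mkₐ_surjective K _ (g (of _ X))
    obtain ⟨q, hq⟩ := Ideal.Quotient.mkₐ_surjective K _ (g (root _))
    obtain ⟨d, hd⟩ : X ^ 2 - C σ ∣ p - C X := mk_eq_mk.1 (by rw [← hπ, hp, hg', mk_C])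
    obtain ⟨e, he⟩ : X ^ 2 - C σ ∣ q - X := mk_eq_mk.1 (by rw [← hπ, hq, hg', mk_X])
    rw [sub_eq_iff_eq_add'] at hd he
    subst hd he
    exact ⟨d, e, (hlift d e).1 (by rw [hp, hq]; exact apply_root_sq g)⟩
  · rintro ⟨d, e, hde⟩
    let g := liftAlgHom (X ^ 2 - C σ) (aeval (mkQ (C X + (X ^ 2 - C σ) * d)))
      (mkQ (X + (X ^ 2 - C σ) * e))
      (by rw [eval₂_sub, eval₂_X_pow, eval₂_C, sub_eq_zero]; exact (hlift d e).2 hde)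
    refine ⟨g, ?_⟩
    ext
    · show π.kerSquareLift (g (of _ X)) = of _ X
      rw [liftAlgHom_of, aeval_X, ← mk_C]
      exact (hπ _).trans (mk_eq_mk.2 ⟨d, by ring⟩)
    · show π.kerSquareLift (g (root _)) = root _
      rw [liftAlgHom_root, ← mk_X]
      exact (hπ _).trans (mk_eq_mk.2 ⟨e, by ring⟩)

end AdjoinRoot

/-- Lemma 4.2(3), affine-chart form: for a field `K` of characteristic `≠ 2` and a polynomial
`σ ∈ K[z]`, the `K`-algebra `K[z][τ]/(τ² - σ)` is smooth over `K` iff `σ` is separable. -/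
theorem adjoinRoot_smooth_iff_separable {K : Type*} [Field K] (h2 : (2 : K) ≠ 0)
    (σ : Polynomial K) :
    Algebra.Smooth K (AdjoinRoot (X ^ 2 - C σ)) ↔ σ.Separable := by
  rw [separable_def, ← exists_X_sq_sub_C_dvd_iff_isCoprime h2.isUnit,
    ← AdjoinRoot.formallySmooth_iff_exists_dvd]
  exact ⟨fun h ↦ h.formallySmooth, fun h ↦ ⟨h, inferInstance⟩⟩
end

section
/- Let R be a commutative ring in which 2 is a unit and let Q be a commutative R-algebra that is free of rank 2 as an R-module. If u, v ∈ Q both have trace zero (Algebra.trace R Q u = 0 and Algebra.trace R Q v = 0), then the product u·v lies in the R-submodule R·1 of Q spanned by the identity, i.e. u·v = (algebraMap R Q) r for some r ∈ R. -/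
/-!
By Cayley–Hamilton for multiplication by `w`, every element of a free rank-2 algebra satisfies
`w² = tr(w) w - N(w)`, so the square of a traceless element lies in `R`. Polarization,
`2uv = (u + v)² - u² - v²`, and the invertibility of `2` then give the claim for products.
-/

open Polynomial

-- Over the zero ring `finrank` is `1` by convention.
theorem Module.nontrivial_scalars_of_one_lt_finrank {R M : Type*} [Semiring R] [AddCommMonoid M]
    [Module R M] (h : 1 < Module.finrank R M) : Nontrivial R :=
  not_subsingleton_iff_nontrivial.mp fun _ ↦ by simp at h

namespace Algebra

variable {R Q : Type*} [CommRing R] [CommRing Q] [Algebra R Q] [Module.Free R Q]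
  [Module.Finite R Q]

theorem charpoly_lmul_of_finrank_eq_two (hrank : Module.finrank R Q = 2) (w : Q) :
    (lmul R Q w).charpoly = X ^ 2 - C (trace R Q w) * X + C (norm R w) := by
  have : Nontrivial R := Module.nontrivial_scalars_of_one_lt_finrank (by rw [hrank]; norm_num)
  let b := Module.Free.chooseBasis R Q
  rw [← LinearMap.charpoly_toMatrix _ b, trace_eq_matrix_trace b, norm_eq_matrix_det b,
    ← leftMulMatrix_apply]
  exact (leftMulMatrix b w).charpoly_of_card_eq_two
    (by rw [← Module.finrank_eq_card_chooseBasisIndex, hrank])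

theorem mul_self_eq_trace_smul_sub_norm (hrank : Module.finrank R Q = 2) (w : Q) :
    w * w = trace R Q w • w - algebraMap R Q (norm R w) := by
  have h := aeval_self_charpoly_lmul (R := R) w
  rw [charpoly_lmul_of_finrank_eq_two hrank] at h
  simp only [map_add, map_sub, map_mul, map_pow, aeval_X, aeval_C] at h
  rw [smul_def]
  linear_combination h

end Algebra

/-- The multiplication claim from the Appendix (§8): for a commutative ring `R` in which `2` is
a unit and a commutative `R`-algebra `Q` that is free of rank `2` as an `R`-module, the product
of two traceless elements of `Q` lies in `R·1`. -/
theorem mul_traceless_mem_bot {R Q : Type*} [CommRing R] [CommRing Q] [Algebra R Q]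
    (h2 : IsUnit (2 : R)) [Module.Free R Q] (hrank : Module.finrank R Q = 2)
    (u v : Q) (hu : Algebra.trace R Q u = 0) (hv : Algebra.trace R Q v = 0) :
    ∃ r : R, u * v = algebraMap R Q r := by
  have : Nontrivial R := Module.nontrivial_scalars_of_one_lt_finrank (by rw [hrank]; norm_num)
  have : Module.Finite R Q := Module.finite_of_finrank_eq_succ hrank
  set N : Q →* R := Algebra.norm R
  have hsq {w : Q} (hw : Algebra.trace R Q w = 0) : w * w = -algebraMap R Q (N w) := by
    rw [Algebra.mul_self_eq_trace_smul_sub_norm hrank, hw, zero_smul, zero_sub]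
  have huv : Algebra.trace R Q (u + v) = 0 := by rw [map_add, hu, hv, add_zero]
  have h2uv : algebraMap R Q 2 * (u * v) = algebraMap R Q (N u + N v - N (u + v)) := by
    rw [map_sub, map_add, map_ofNat]
    linear_combination hsq huv - hsq hu - hsq hv
  refine ⟨h2.unit⁻¹ * (N u + N v - N (u + v)), ?_⟩
  rw [map_mul, ← h2uv, ← mul_assoc, ← map_mul, IsUnit.val_inv_mul, map_one, one_mul]
end

section
/- Let A be a commutative ring in which 2 is a unit and let c ∈ A. Then the A-algebra A[τ]/(τ² − c), i.e. AdjoinRoot (X² − C c) over A, is étale over A if and only if c is a unit in A. -/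
/-!
For monic `f`, the algebra `A[τ]/(f)` is étale iff `f'(τ)` is a unit. If it is, `f'` and `f`
are coprime and `A[τ]/(f)` is the standard étale algebra of the pair `(f, 1)`. If it is not,
then over the dual numbers of `A[τ]/(f, f'(τ))` both `τ` and `τ + ε` are roots of `f`, and they
give two distinct lifts of the same map modulo `ε`, which formal unramifiedness forbids.

For `f = τ² - c` we have `f'(τ) = 2τ` and `τ² = c`, so (with `2` a unit) `f'(τ)` is a unit iff
`c` becomes a unit in `A[τ]/(f)`; since this algebra is free, taking norms shows that `c` is then
already a unit in `A`.
-/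

open Polynomial

theorem Module.Basis.isUnit_of_isUnit_algebraMap {R S ι : Type*} [CommRing R] [CommRing S]
    [Algebra R S] [Fintype ι] [Nonempty ι] (b : Module.Basis ι R S) {a : R}
    (h : IsUnit (algebraMap R S a)) : IsUnit a := by
  have := h.map (Algebra.norm R)
  rwa [Algebra.norm_algebraMap_of_basis b, isUnit_pow_iff Fintype.card_ne_zero] at this

namespace AdjoinRoot

variable {R : Type*} [CommRing R] {f : R[X]}

theorem isUnit_of_isUnit_algebraMap (hf : f.Monic) (hdeg : f.natDegree ≠ 0) {a : R}
    (h : IsUnit (algebraMap R (AdjoinRoot f) a)) : IsUnit a :=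
  have : Nonempty (Fin (powerBasis' hf).dim) := ⟨⟨0, Nat.pos_of_ne_zero hdeg⟩⟩
  (powerBasis' hf).basis.isUnit_of_isUnit_algebraMap h

theorem isUnit_aeval_root_derivative_of_formallyUnramified
    [Algebra.FormallyUnramified R (AdjoinRoot f)] :
    IsUnit (aeval (root f) (derivative f)) := by
  set d := aeval (root f) (derivative f)
  by_contra hd
  let Q := AdjoinRoot f ⧸ Ideal.span {d}
  have : Nontrivial Q :=
    Ideal.Quotient.nontrivial_iff.mpr (by rwa [Ne, Ideal.span_singleton_eq_top])
  let φ : AdjoinRoot f →ₐ[R] DualNumber Q :=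
    (TrivSqZeroExt.inlAlgHom R Q Q).comp (Ideal.Quotient.mkₐ R _)
  have hφd : φ d = 0 := by
    change TrivSqZeroExt.inl (Ideal.Quotient.mk _ d) = 0
    rw [Ideal.Quotient.mk_singleton_self, TrivSqZeroExt.inl_zero]
  have hroot : aeval (φ (root f) + DualNumber.eps) f = 0 := by
    rw [aeval_add_of_sq_eq_zero _ _ _ (by rw [sq, DualNumber.eps_mul_eps]), aeval_algHom_eq_zero,
      aeval_algHom_apply, hφd, zero_mul, add_zero]
  let ψ : AdjoinRoot f →ₐ[R] DualNumber Q := liftAlgHom f (Algebra.ofId R _) _ hroot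
  have hψ : ψ (root f) = φ (root f) + DualNumber.eps := liftAlgHom_root _ _ _ _
  let I := Ideal.span {(DualNumber.eps : DualNumber Q)}
  have hI : I ^ 2 = ⊥ := by
    rw [Ideal.span_singleton_pow, sq, DualNumber.eps_mul_eps, Ideal.span_singleton_eq_bot]
  have hφψ : φ = ψ := Algebra.FormallyUnramified.comp_injective I hI <| algHom_ext <| by
    change Ideal.Quotient.mk I (φ (root f)) = Ideal.Quotient.mk I (ψ (root f))
    rw [hψ, Ideal.Quotient.mk_eq_mk_iff_sub_mem, sub_add_cancel_left]
    exact I.neg_mem (Ideal.mem_span_singleton_self _)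
  have hε : DualNumber.eps = (0 : DualNumber Q) := by
    rwa [hφψ, left_eq_add] at hψ
  simpa using congr(TrivSqZeroExt.snd $hε)

theorem isCoprime_derivative_of_isUnit_aeval_root_derivative
    (h : IsUnit (aeval (root f) (derivative f))) : IsCoprime (derivative f) f := by
  obtain ⟨u, hu⟩ := h.exists_right_inv
  obtain ⟨p, rfl⟩ := mk_surjective u
  rw [aeval_eq, ← map_mul, ← map_one (mk f), ← sub_eq_zero, ← map_sub, mk_eq_zero] at hu
  obtain ⟨q, hq⟩ := hu
  exact ⟨p, -q, by linear_combination hq⟩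

theorem etale_of_isCoprime_derivative (hf : f.Monic) (h : IsCoprime (derivative f) f) :
    Algebra.Etale R (AdjoinRoot f) := by
  obtain ⟨p, q, hpq⟩ := h
  let P : StandardEtalePair R := ⟨f, hf, 1, p, q, 0, by rw [pow_zero, ← hpq]; ring⟩
  have hP : P.HasMap (root f) := ⟨by rw [aeval_eq, mk_self], by simp [P]⟩
  let φ : P.Ring →ₐ[R] AdjoinRoot f := P.lift (root f) hP
  let ψ : AdjoinRoot f →ₐ[R] P.Ring := liftAlgHom f (Algebra.ofId R _) P.X P.hasMap_X.1
  have hφ : φ P.X = root f := P.lift_X _ _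
  have hψ : ψ (root f) = P.X := liftAlgHom_root _ _ _ _
  exact .of_equiv <| .ofAlgHom φ ψ
    (algHom_ext <| by rw [AlgHom.comp_apply, hψ, hφ, AlgHom.id_apply])
    (P.hom_ext <| by rw [AlgHom.comp_apply, hφ, hψ, AlgHom.id_apply])

theorem etale_iff_isUnit_aeval_root_derivative (hf : f.Monic) :
    Algebra.Etale R (AdjoinRoot f) ↔ IsUnit (aeval (root f) (derivative f)) :=
  ⟨fun _ ↦ isUnit_aeval_root_derivative_of_formallyUnramified, fun h ↦
    etale_of_isCoprime_derivative hf (isCoprime_derivative_of_isUnit_aeval_root_derivative h)⟩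

end AdjoinRoot

/-- The étale criterion from Theorem 8.1 (Appendix): for a commutative ring `A` in which `2` is
a unit and `c ∈ A`, the `A`-algebra `A[τ]/(τ² - c)` is étale over `A` iff `c` is a unit. -/
theorem adjoinRoot_etale_iff_isUnit {A : Type*} [CommRing A] (h2 : IsUnit (2 : A)) (c : A) :
    Algebra.Etale A (AdjoinRoot (X ^ 2 - C c)) ↔ IsUnit c := by
  have hmonic : (X ^ 2 - C c).Monic := monic_X_pow_sub_C c two_ne_zero
  have hderiv : aeval (AdjoinRoot.root (X ^ 2 - C c)) (derivative (X ^ 2 - C c)) =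
      algebraMap A _ 2 * AdjoinRoot.root (X ^ 2 - C c) := by
    rw [derivative_sub, derivative_X_pow, derivative_C, sub_zero, map_mul, aeval_C, aeval_X_pow,
      Nat.cast_ofNat, pow_one]
  have hsq : AdjoinRoot.root (X ^ 2 - C c) ^ 2 = algebraMap A _ c := by
    have := AdjoinRoot.aeval_eq (f := X ^ 2 - C c) (X ^ 2 - C c)
    rwa [AdjoinRoot.mk_self, map_sub, map_pow, aeval_X, aeval_C, sub_eq_zero] at this
  rw [AdjoinRoot.etale_iff_isUnit_aeval_root_derivative hmonic, hderiv, IsUnit.mul_iff,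
    and_iff_right (h2.map _), ← isUnit_pow_iff two_ne_zero, hsq]
  refine ⟨fun h ↦ ?_, IsUnit.map _⟩
  nontriviality A
  exact AdjoinRoot.isUnit_of_isUnit_algebraMap hmonic (by simp) h
end

section
/- Let A be a discrete valuation ring in which 2 is a unit, let σ ∈ A be nonzero, and let R := A[τ]/(τ² − σ) (i.e. AdjoinRoot (X² − C σ) over A). Let M be an R-module that is traceable, i.e. M is free of rank 2 as an A-module and for every r ∈ R the trace of the A-linear endomorphism of M given by scalar multiplication by r equals Algebra.trace A R r. Then M is torsion-free as an R-module: for every r in the set of non-zero-divisors of R and every m ∈ M, r • m = 0 implies m = 0. -/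
/-!
A regular element `x` of a finite free algebra `S` over a domain `R` divides its norm
`N(x) = det (y ↦ x * y)` in `S` (Cayley–Hamilton), and `N(x) ≠ 0` because multiplication by `x`
is injective. So `x • m = 0` forces `N(x) • m = 0`, hence `m = 0` as soon as `M` is torsion-free
over `R`. A traceable module is free over `A`, and `A[τ]/(τ² - σ)` is free over `A` with basis
`1, τ`.
-/

open Polynomial

namespace Algebra

variable {R S : Type*} [CommRing R] [CommRing S] [Algebra R S] [Module.Free R S]
  [Module.Finite R S]

theorem dvd_algebraMap_norm_self (x : S) : x ∣ algebraMap R S (norm R x) := by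
  set p := (lmul R S x).charpoly
  have hp : aeval x p = 0 := aeval_self_charpoly_lmul x
  have hcoeff : x ∣ algebraMap R S (p.coeff 0) := by
    obtain ⟨q, hq⟩ := X_dvd_sub_C (p := p)
    refine dvd_neg.mp ⟨aeval x q, ?_⟩
    simpa only [map_sub, hp, aeval_C, map_mul, aeval_X, zero_sub]
      using congrArg (aeval x) hq
  rw [norm_apply, LinearMap.det_eq_sign_charpoly_coeff, map_mul]
  exact hcoeff.mul_left _

theorem norm_ne_zero_of_isRegular [IsDomain R] {x : S} (hx : IsRegular x) : norm R x ≠ 0 := by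
  rw [norm_apply, Ne, LinearMap.det_eq_zero_iff_ker_ne_bot, not_not, LinearMap.ker_eq_bot]
  exact hx.left

end Algebra

theorem Module.IsTorsionFree.of_finite_free (R : Type*) {S M : Type*} [CommRing R] [IsDomain R]
    [CommRing S] [Algebra R S] [Module.Free R S] [Module.Finite R S] [AddCommGroup M]
    [Module S M] [Module R M] [IsScalarTower R S M] [Module.IsTorsionFree R M] :
    Module.IsTorsionFree S M where
  isSMulRegular x hx := IsSMulRegular.of_right_eq_zero_of_smul fun m hxm => by
    obtain ⟨y, hy⟩ := Algebra.dvd_algebraMap_norm_self (R := R) x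
    have hnorm : Algebra.norm R x • m = 0 := by
      rw [← algebraMap_smul S, hy, mul_comm, mul_smul, hxm, smul_zero]
    exact (smul_eq_zero.mp hnorm).resolve_left (Algebra.norm_ne_zero_of_isRegular hx)

theorem traceable_module_torsionFree_general {A : Type*} [CommRing A] [IsDomain A]
    (σ : A)
    (M : Type*) [AddCommGroup M] [Module (AdjoinRoot (X ^ 2 - C σ)) M] [Module A M]
    [IsScalarTower A (AdjoinRoot (X ^ 2 - C σ)) M] [Module.Free A M] :
    ∀ r ∈ nonZeroDivisors (AdjoinRoot (X ^ 2 - C σ)), ∀ m : M, r • m = 0 → m = 0 := by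
  have hmonic : (X ^ 2 - C σ).Monic := monic_X_pow_sub_C σ two_ne_zero
  have := hmonic.free_adjoinRoot
  have := hmonic.finite_adjoinRoot
  have := Module.IsTorsionFree.of_finite_free A (S := AdjoinRoot (X ^ 2 - C σ)) (M := M)
  intro r hr m hrm
  exact ((isRegular_iff_mem_nonZeroDivisors.mpr hr).isSMulRegular (M := M)).right_eq_zero_of_smul hrm

/-- Local form of Theorem 6.7(2): over a discrete valuation ring `A` in which `2` is a unit,
with `σ ∈ A` nonzero and `R := A[τ]/(τ² - σ)`, every traceable `R`-module (free of rank `2`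
over `A`, with the trace of multiplication by any `r ∈ R` on `M` equal to `Algebra.trace A R r`)
is torsion-free over `R`. -/
theorem traceable_module_torsionFree {A : Type*} [CommRing A] [IsDomain A]
    [IsDiscreteValuationRing A] (h2 : IsUnit (2 : A)) (σ : A) (hσ : σ ≠ 0)
    (M : Type*) [AddCommGroup M] [Module (AdjoinRoot (X ^ 2 - C σ)) M] [Module A M]
    [IsScalarTower A (AdjoinRoot (X ^ 2 - C σ)) M] [Module.Free A M]
    (hrank : Module.finrank A M = 2)
    (htr : ∀ r : AdjoinRoot (X ^ 2 - C σ),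
      LinearMap.trace A M ((LinearMap.lsmul (AdjoinRoot (X ^ 2 - C σ)) M r).restrictScalars A)
        = Algebra.trace A (AdjoinRoot (X ^ 2 - C σ)) r) :
    ∀ r ∈ nonZeroDivisors (AdjoinRoot (X ^ 2 - C σ)), ∀ m : M, r • m = 0 → m = 0 :=
  traceable_module_torsionFree_general σ M
end

section
/- Let A be a discrete valuation ring in which 2 is a unit, and let R := A[τ]/(τ²) be the dual numbers over A (i.e. DualNumber A, or AdjoinRoot X² over A). Let M be an R-module that is traceable, i.e. M is free of rank 2 as an A-module and for every r ∈ R the trace of the A-linear endomorphism of M given by scalar multiplication by r equals Algebra.trace A R r. Then M is torsion-free as an R-module: for every r in the set of non-zero-divisors of R and every m ∈ M, r • m = 0 implies m = 0. -/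
/-!
Writing `r = a + bε`, a regular element of `A[ε]` has `a` regular in `A`, since `ε * r = a ε`.
If `r • m = 0` then `a • (ε • m) = ε • (r • m) = 0`, so `ε • m = 0`, and then `a • m = r • m = 0`,
so `m = 0`, using that `M` is torsion-free over `A` because it is free.
-/

open DualNumber TrivSqZeroExt
open scoped nonZeroDivisors

namespace DualNumber

variable {R M : Type*} [CommRing R]

theorem eps_mul_eq_fst_smul_eps (r : R[ε]) : ε * r = r.fst • ε := by
  ext <;> simp

theorem fst_mem_nonZeroDivisors {r : R[ε]} (hr : r ∈ R[ε]⁰) : r.fst ∈ R⁰ :=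
  mem_nonZeroDivisors_iff_right.mpr fun a ha => by
    have : inr a * r = 0 := by
      rw [inr_eq_smul_eps, smul_mul_assoc, eps_mul_eq_fst_smul_eps, smul_smul, ha, zero_smul]
    simpa using congrArg snd (mem_nonZeroDivisors_iff_right.mp hr _ this)

variable [AddCommGroup M] [Module R M] [Module R[ε] M] [IsScalarTower R R[ε] M]

theorem smul_eq_fst_smul_add_snd_smul_eps_smul (r : R[ε]) (m : M) :
    r • m = r.fst • m + r.snd • (ε : R[ε]) • m := by
  conv_lhs => rw [← inl_fst_add_inr_snd_eq r, add_smul, inr_eq_smul_eps, smul_assoc,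
    ← algebraMap_eq_inl, algebraMap_smul]

theorem eps_smul_smul (r : R[ε]) (m : M) : (ε : R[ε]) • r • m = r.fst • (ε : R[ε]) • m := by
  rw [smul_smul, eps_mul_eq_fst_smul_eps, smul_assoc]

instance isTorsionFree [Module.IsTorsionFree R M] : Module.IsTorsionFree R[ε] M where
  isSMulRegular r hr := by
    have hfst : IsRegular r.fst := isRegular_iff_mem_nonZeroDivisors.mpr <|
      fst_mem_nonZeroDivisors (isRegular_iff_mem_nonZeroDivisors.mp hr)
    refine IsSMulRegular.of_right_eq_zero_of_smul fun m hm => ?_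
    have heps : (ε : R[ε]) • m = 0 :=
      hfst.smul_eq_zero_iff_right.mp (by rw [← eps_smul_smul, hm, smul_zero])
    rw [smul_eq_fst_smul_add_snd_smul_eps_smul, heps, smul_zero, add_zero] at hm
    exact hfst.smul_eq_zero_iff_right.mp hm

end DualNumber

theorem traceable_module_dualNumber_torsionFree_general {A : Type*} [CommRing A]
    (M : Type*) [AddCommGroup M] [Module (DualNumber A) M] [Module A M]
    [IsScalarTower A (DualNumber A) M] [Module.Free A M] :
    ∀ r ∈ nonZeroDivisors (DualNumber A), ∀ m : M, r • m = 0 → m = 0 :=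
  fun _ hr _ => (isRegular_iff_mem_nonZeroDivisors.mpr hr).smul_eq_zero_iff_right.mp

/-- Local form of Theorem 6.7(3): over a discrete valuation ring `A` in which `2` is a unit,
with `R := A[τ]/(τ²)` the dual numbers over `A`, every traceable `R`-module (free of rank `2`
over `A`, with the trace of multiplication by any `r ∈ R` on `M` equal to `Algebra.trace A R r`)
is torsion-free over `R`. -/
theorem traceable_module_dualNumber_torsionFree {A : Type*} [CommRing A] [IsDomain A]
    [IsDiscreteValuationRing A] (h2 : IsUnit (2 : A))
    (M : Type*) [AddCommGroup M] [Module (DualNumber A) M] [Module A M]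
    [IsScalarTower A (DualNumber A) M] [Module.Free A M]
    (hrank : Module.finrank A M = 2)
    (htr : ∀ r : DualNumber A,
      LinearMap.trace A M ((LinearMap.lsmul (DualNumber A) M r).restrictScalars A)
        = Algebra.trace A (DualNumber A) r) :
    ∀ r ∈ nonZeroDivisors (DualNumber A), ∀ m : M, r • m = 0 → m = 0 :=
  traceable_module_dualNumber_torsionFree_general M
end

section
/- Let A be a discrete valuation ring in which 2 is a unit, let σ ∈ A be an element not lying in the square of the maximal ideal of A, and let R := A[τ]/(τ² − σ) (i.e. AdjoinRoot (X² − C σ) over A). Let M be an R-module that is traceable, i.e. M is free of rank 2 as an A-module and for every r ∈ R the trace of the A-linear endomorphism of M given by scalar multiplication by r equals Algebra.trace A R r. Then M is a free R-module of rank 1, i.e. there exists an R-linear isomorphism M ≃ R. -/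
/-!
Multiplication by `τ` is an `A`-endomorphism of `M` whose trace is the trace of `τ` on `R`, namely
`0`, and whose square is `σ`; so in a basis it is a traceless matrix `t` with `det t = -σ ∉ 𝔪²`.
Then some entry of `t` is a unit (the off-diagonal ones, or else `t₀₀`, as otherwise
`det t = -t₀₀² - t₀₁ t₁₀ ∈ 𝔪²`), and accordingly `v = (1, 0)`, `(0, 1)` or `(1, 1)` is a cyclic
vector: `v, t v` is a basis, using `2 ∈ Aˣ` in the last case. The map `r ↦ r • v` sends the
`A`-basis `1, τ` of `R` to this basis, hence is an isomorphism of `R`-modules `R ≃ M`.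
-/

open Polynomial IsLocalRing

namespace Matrix

variable {A : Type*} [CommRing A]

theorem det_of_vec_mulVec (t : Matrix (Fin 2) (Fin 2) A) (v : Fin 2 → A) :
    (of ![v, t *ᵥ v]).det =
      v 0 * (t 1 0 * v 0 + t 1 1 * v 1) - v 1 * (t 0 0 * v 0 + t 0 1 * v 1) := by
  simp [det_fin_two]

theorem exists_isUnit_det_vec_mulVec_of_trace_eq_zero [IsLocalRing A] (h2 : IsUnit (2 : A))
    {t : Matrix (Fin 2) (Fin 2) A} (htr : t.trace = 0) (hdet : t.det ∉ maximalIdeal A ^ 2) :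
    ∃ v : Fin 2 → A, IsUnit (of ![v, t *ᵥ v]).det := by
  by_cases h10 : IsUnit (t 1 0)
  · exact ⟨![1, 0], by simpa [det_of_vec_mulVec] using h10⟩
  by_cases h01 : IsUnit (t 0 1)
  · exact ⟨![0, 1], by simpa [det_of_vec_mulVec] using h01.neg⟩
  have h11 : t 1 1 = -t 0 0 := by rw [trace_fin_two] at htr; linear_combination htr
  have h00 : IsUnit (t 0 0) := by
    by_contra h00
    apply hdet
    rw [det_fin_two, h11, sq]
    exact sub_mem (Ideal.mul_mem_mul h00 (neg_mem h00)) (Ideal.mul_mem_mul h01 h10)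
  refine ⟨![1, 1], ?_⟩
  have hd : (of ![![1, 1], t *ᵥ ![1, 1]]).det = t 1 0 - t 0 1 - 2 * t 0 0 := by
    rw [det_of_vec_mulVec]
    simp only [cons_val_zero, cons_val_one, one_mul, mul_one]
    linear_combination h11
  rw [hd]
  by_contra h
  refine absurd (h2.mul h00) (show 2 * t 0 0 ∈ maximalIdeal A from ?_)
  rw [show 2 * t 0 0 = t 1 0 - t 0 1 - (t 1 0 - t 0 1 - 2 * t 0 0) by ring]
  exact sub_mem (sub_mem h10 h01) h

theorem det_eq_neg_of_trace_eq_zero_of_mul_self_eq {t : Matrix (Fin 2) (Fin 2) A} {σ : A}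
    (htr : t.trace = 0) (hsq : t * t = σ • 1) : t.det = -σ := by
  have h00 := congr_fun (congr_fun hsq 0) 0
  simp only [mul_apply, Fin.sum_univ_two, smul_apply, one_apply_eq, smul_eq_mul, mul_one] at h00
  rw [trace_fin_two] at htr
  rw [det_fin_two]
  linear_combination t 0 0 * htr - h00

end Matrix

namespace AdjoinRoot

variable {A : Type*} [CommRing A] (σ : A)

theorem root_X_sq_sub_C_mul_self :
    root (X ^ 2 - C σ) * root (X ^ 2 - C σ) = algebraMap A (AdjoinRoot (X ^ 2 - C σ)) σ := by
  have h := eval₂_root (X ^ 2 - C σ)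
  rw [eval₂_sub, eval₂_X_pow, eval₂_C, sub_eq_zero] at h
  rw [← sq, h, algebraMap_eq]

variable [Nontrivial A]

noncomputable def basisXSqSubC : Module.Basis (Fin 2) A (AdjoinRoot (X ^ 2 - C σ)) :=
  (powerBasis' (monic_X_pow_sub_C σ two_ne_zero)).basis.reindex (finCongr natDegree_X_pow_sub_C)

theorem basisXSqSubC_apply (i : Fin 2) : basisXSqSubC σ i = root (X ^ 2 - C σ) ^ (i : ℕ) := by
  rw [basisXSqSubC, Module.Basis.reindex_apply, PowerBasis.coe_basis]
  rfl

theorem basisXSqSubC_zero : basisXSqSubC σ 0 = 1 := by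
  simpa using basisXSqSubC_apply σ 0

theorem basisXSqSubC_one : basisXSqSubC σ 1 = root (X ^ 2 - C σ) := by
  simpa using basisXSqSubC_apply σ 1

theorem trace_root_X_sq_sub_C :
    Algebra.trace A (AdjoinRoot (X ^ 2 - C σ)) (root (X ^ 2 - C σ)) = 0 := by
  classical
  rw [Algebra.trace_eq_matrix_trace (basisXSqSubC σ), Matrix.trace_fin_two,
    Algebra.leftMulMatrix_eq_repr_mul, Algebra.leftMulMatrix_eq_repr_mul, basisXSqSubC_zero,
    basisXSqSubC_one, mul_one, root_X_sq_sub_C_mul_self, Algebra.algebraMap_eq_smul_one,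
    ← basisXSqSubC_zero, ← basisXSqSubC_one]
  simp

open Matrix

variable {M : Type*} [AddCommGroup M] [Module (AdjoinRoot (X ^ 2 - C σ)) M] [Module A M]
  [IsScalarTower A (AdjoinRoot (X ^ 2 - C σ)) M]

theorem toMatrix_basisXSqSubC_toSpanSingleton (bM : Module.Basis (Fin 2) A M) (e : M) :
    LinearMap.toMatrix (basisXSqSubC σ) bM
        ((LinearMap.toSpanSingleton (AdjoinRoot (X ^ 2 - C σ)) M e).restrictScalars A) =
      (Matrix.of ![bM.repr e, LinearMap.toMatrix bM bM
        ((LinearMap.lsmul (AdjoinRoot (X ^ 2 - C σ)) M (root (X ^ 2 - C σ))).restrictScalars A)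
          *ᵥ bM.repr e])ᵀ := by
  ext i j
  fin_cases j
  · simp [LinearMap.toMatrix_apply, basisXSqSubC_zero]
  · simp [LinearMap.toMatrix_apply, basisXSqSubC_one, LinearMap.toMatrix_mulVec_repr]

end AdjoinRoot

/-- Local form of Theorem 6.7(1): over a discrete valuation ring `A` in which `2` is a unit,
with `σ ∈ A` not in the square of the maximal ideal and `R := A[τ]/(τ² - σ)`, every traceable
`R`-module (free of rank `2` over `A`, with the trace of multiplication by any `r ∈ R` on `M`
equal to `Algebra.trace A R r`) is a free `R`-module of rank `1`. -/
theorem traceable_module_free_of_not_mem_sq_maximalIdeal {A : Type*} [CommRing A] [IsDomain A]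
    [IsDiscreteValuationRing A] (h2 : IsUnit (2 : A)) (σ : A)
    (hσ : σ ∉ (IsLocalRing.maximalIdeal A) ^ 2)
    (M : Type*) [AddCommGroup M] [Module (AdjoinRoot (X ^ 2 - C σ)) M] [Module A M]
    [IsScalarTower A (AdjoinRoot (X ^ 2 - C σ)) M] [Module.Free A M]
    (hrank : Module.finrank A M = 2)
    (htr : ∀ r : AdjoinRoot (X ^ 2 - C σ),
      LinearMap.trace A M ((LinearMap.lsmul (AdjoinRoot (X ^ 2 - C σ)) M r).restrictScalars A)
        = Algebra.trace A (AdjoinRoot (X ^ 2 - C σ)) r) :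
    Nonempty (M ≃ₗ[AdjoinRoot (X ^ 2 - C σ)] AdjoinRoot (X ^ 2 - C σ)) := by
  have : Module.Finite A M := Module.finite_of_finrank_eq_succ hrank
  let bM := Module.finBasisOfFinrankEq A M hrank
  let τ := (LinearMap.lsmul (AdjoinRoot (X ^ 2 - C σ)) M
    (AdjoinRoot.root (X ^ 2 - C σ))).restrictScalars A
  let t := LinearMap.toMatrix bM bM τ
  have htrace : t.trace = 0 := by
    rw [← LinearMap.trace_eq_matrix_trace, htr, AdjoinRoot.trace_root_X_sq_sub_C]
  have hsq : t * t = σ • 1 := by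
    have hτ : τ ∘ₗ τ = σ • LinearMap.id := LinearMap.ext fun m => by
      simp only [τ, LinearMap.comp_apply, LinearMap.restrictScalars_apply, LinearMap.lsmul_apply,
        LinearMap.smul_apply, LinearMap.id_apply, smul_smul, AdjoinRoot.root_X_sq_sub_C_mul_self,
        algebraMap_smul]
    rw [← LinearMap.toMatrix_comp, hτ, map_smul, LinearMap.toMatrix_id]
  have hdet : t.det ∉ maximalIdeal A ^ 2 := by
    rw [Matrix.det_eq_neg_of_trace_eq_zero_of_mul_self_eq htrace hsq, neg_mem_iff]
    exact hσ
  obtain ⟨v, hv⟩ := Matrix.exists_isUnit_det_vec_mulVec_of_trace_eq_zero h2 htrace hdet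
  let e := bM.equivFun.symm v
  have hev : ⇑(bM.repr e) = v := by
    rw [← Module.Basis.equivFun_apply, LinearEquiv.apply_symm_apply]
  have he : IsUnit (LinearMap.toMatrix (AdjoinRoot.basisXSqSubC σ) bM
      ((LinearMap.toSpanSingleton (AdjoinRoot (X ^ 2 - C σ)) M e).restrictScalars A)).det := by
    rwa [AdjoinRoot.toMatrix_basisXSqSubC_toSpanSingleton, Matrix.det_transpose, hev]
  exact ⟨(LinearEquiv.ofBijective (LinearMap.toSpanSingleton _ M e)
    (LinearEquiv.ofIsUnitDet he).bijective).symm⟩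
end

section
/- Let A be a discrete valuation ring in which 2 is a unit, let F be the fraction field of A, let σ ∈ A be nonzero, and let R := A[τ]/(τ² − σ) (i.e. AdjoinRoot (X² − C σ) over A). Then R ⊗_A F is the total ring of fractions of R; that is, R ⊗_A F, with its canonical R-algebra structure, is the localization of R at its multiplicative set of non-zero-divisors (IsLocalization (nonZeroDivisors R) (R ⊗_A F)). -/
/-!
`R` is free of finite rank over `A`, so the non-zero-divisors of `A` stay non-zero-divisors in `R`
and `R ⊗[A] F` is the localization of `R` at their image. Being finite over the field `F`, the ring
`R ⊗[A] F` is Artinian, so every non-zero-divisor of `R`, which stays a non-zero-divisor there, is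
already a unit; hence enlarging the submonoid to all non-zero-divisors of `R` changes nothing.
-/

open Polynomial TensorProduct nonZeroDivisors

theorem Algebra.algebraMapSubmonoid_nonZeroDivisors_le {A B : Type*} [CommRing A] [CommRing B]
    [Algebra A B] [Module.IsTorsionFree A B] : algebraMapSubmonoid B A⁰ ≤ B⁰ := by
  rintro _ ⟨a, ha, rfl⟩
  have : IsSMulRegular B a := (isRegular_iff_mem_nonZeroDivisors.mpr ha).isSMulRegular
  rw [← isRegular_iff_mem_nonZeroDivisors, ← isLeftRegular_iff_isRegular]
  exact (isSMulRegular_algebraMap_iff B).mpr this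

theorem IsLocalization.nonZeroDivisors_of_isArtinianRing {R S : Type*} [CommRing R] [CommRing S]
    [Algebra R S] [IsArtinianRing S] (M : Submonoid R) (hM : M ≤ R⁰) [IsLocalization M S] :
    IsLocalization R⁰ S :=
  of_le M R⁰ hM fun _ hr ↦
    IsArtinianRing.isUnit_of_mem_nonZeroDivisors (nonZeroDivisors_le_comap M S hr)

instance isArtinianRing_tensorProduct (A R K : Type*) [CommRing A] [CommRing R] [Algebra A R]
    [CommRing K] [Algebra A K] [IsArtinianRing K] [Module.Finite A R] :
    IsArtinianRing (R ⊗[A] K) :=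
  have : IsArtinianRing (K ⊗[A] R) := IsArtinianRing.of_finite K _
  (Algebra.TensorProduct.comm A K R).toRingEquiv.isArtinianRing

theorem isLocalization_nonZeroDivisors_tensorProduct_of_isFractionRing {A R K : Type*}
    [CommRing A] [CommRing R] [Algebra A R] [Module.Finite A R] [Module.IsTorsionFree A R]
    [CommRing K] [Algebra A K] [IsArtinianRing K] [IsFractionRing A K] :
    IsLocalization R⁰ (R ⊗[A] K) :=
  IsLocalization.nonZeroDivisors_of_isArtinianRing _
    (Algebra.algebraMapSubmonoid_nonZeroDivisors_le (A := A))

theorem tensorProduct_fractionRing_isLocalization_general {A : Type*} [CommRing A] [IsDomain A]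
    (σ : A) :
    IsLocalization (nonZeroDivisors (AdjoinRoot (X ^ 2 - C σ)))
      (AdjoinRoot (X ^ 2 - C σ) ⊗[A] FractionRing A) :=
  have hmonic : (X ^ 2 - C σ).Monic := monic_X_pow_sub_C σ two_ne_zero
  have := hmonic.finite_adjoinRoot
  have := hmonic.free_adjoinRoot
  isLocalization_nonZeroDivisors_tensorProduct_of_isFractionRing

/-- The identification `K(R) ≅ R ⊗_A K(A)` from the proof of Theorem 6.7(2): for a discrete
valuation ring `A` in which `2` is a unit, with fraction field `F`, `σ ∈ A` nonzero, and
`R := A[τ]/(τ² - σ)`, the ring `R ⊗[A] F` is the localization of `R` at its multiplicative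
set of non-zero-divisors, i.e. the total ring of fractions of `R`. -/
theorem tensorProduct_fractionRing_isLocalization {A : Type*} [CommRing A] [IsDomain A]
    [IsDiscreteValuationRing A] (h2 : IsUnit (2 : A)) (σ : A) (hσ : σ ≠ 0) :
    IsLocalization (nonZeroDivisors (AdjoinRoot (X ^ 2 - C σ)))
      (AdjoinRoot (X ^ 2 - C σ) ⊗[A] FractionRing A) :=
  tensorProduct_fractionRing_isLocalization_general σ
end
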